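/- arXiv:quant-ph/9906131 — 2 statements merged into one kernel-verified Lean document; each statement's English description precedes it below -/
import Mathlib

section
/- Let n ≥ 2 and k ≥ 1 be integers with S_{n,k} nonempty. Then there exists a code C ∈ S_{n,k} such that B_i(C) ≤ n² · \tilde B_i for all 1 ≤ i ≤ n, where \tilde B_i = ((4^k − 1)/(½(4^{n−1} + (−2)ⁿ) − 1)) · C(n,i) · 3^i. Moreover, the number of codes in S_{n,k} that violate at least one of these n inequalities is at most |S_{n,k}|/n. -/
local notation "F₄" => GaloisField 2 2

/-- Hamming weight: the number of nonzero coordinates. -/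
noncomputable def wt {n : ℕ} (v : Fin n → F₄) : ℕ := Set.ncard {i | v i ≠ 0}

/-- `Snk n k` is the set of all even linear `[n,k]` codes over F₄. -/
def Snk (n k : ℕ) : Set (Submodule F₄ (Fin n → F₄)) :=
  {C | Module.finrank F₄ C = k ∧ ∀ v ∈ C, Even (wt v)}

/-- `Bw i S` is the number of vectors of Hamming weight `i` in the set `S ⊆ F₄ⁿ`. -/
noncomputable def Bw {n : ℕ} (i : ℕ) (S : Set (Fin n → F₄)) : ℕ :=
  Set.ncard {c ∈ S | wt c = i}

/-- The average weight distribution of the codes in `S_{n,k}`: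
`\tilde B_i = ((4^k - 1)/(½(4^{n-1} + (-2)^n) - 1)) · C(n,i) · 3^i`. -/
noncomputable def tildeB (n k i : ℕ) : ℚ :=
  (((4 : ℚ) ^ k - 1) / (((4 : ℚ) ^ (n - 1) + (-2 : ℚ) ^ n) / 2 - 1)) *
    (n.choose i) * 3 ^ i

noncomputable instance : Fintype F₄ := Fintype.ofFinite _
noncomputable instance : DecidableEq F₄ := Classical.decEq _

lemma F4card : Fintype.card F₄ = 4 := by
  have := GaloisField.card 2 2 (by norm_num)
  simpa [Nat.card_eq_fintype_card] using this

lemma F4add_self (x : F₄) : x + x = 0 := by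
  have h := CharP.cast_eq_zero F₄ 2
  push_cast at h
  linear_combination x * h

lemma F4pow4 (x : F₄) : x ^ 4 = x := by
  have := FiniteField.pow_card x
  rwa [F4card] at this

lemma F4pow3 {x : F₄} (hx : x ≠ 0) : x ^ 3 = 1 := by
  have := FiniteField.pow_card_sub_one_eq_one x hx
  rwa [F4card] at this

lemma F4omega : ∃ ω : F₄, ω ^ 2 + ω = 1 := by
  obtain ⟨ω, h0, h1⟩ : ∃ ω : F₄, ω ≠ 0 ∧ ω ≠ 1 := by
    by_contra h
    push_neg at h
    have hsub : (Finset.univ : Finset F₄) ⊆ {0, 1} := by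
      intro x _
      simp only [Finset.mem_insert, Finset.mem_singleton]
      rcases eq_or_ne x 0 with h' | h'
      · exact Or.inl h'
      · exact Or.inr (h x h')
    have := Finset.card_le_card hsub
    rw [Finset.card_univ, F4card] at this
    have h2 : ({0, 1} : Finset F₄).card ≤ 2 := Finset.card_insert_le _ _ |>.trans (by simp)
    omega
  refine ⟨ω, ?_⟩
  have h3 : ω ^ 3 = 1 := F4pow3 h0
  have hz : (ω - 1) * (ω ^ 2 + ω + 1) = 0 := by linear_combination h3
  have h4 : ω ^ 2 + ω + 1 = 0 := by
    rcases mul_eq_zero.1 hz with h | h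
    · exact absurd (sub_eq_zero.1 h) h1
    · exact h
  linear_combination h4 - F4add_self 1

/-- The Hermitian form on `F₄ⁿ`. -/
noncomputable def hf {n : ℕ} (u v : Fin n → F₄) : F₄ := ∑ i, u i * (v i) ^ 2

/-- `q v = hf v v`, the Hermitian norm. -/
noncomputable def qf {n : ℕ} (v : Fin n → F₄) : F₄ := hf v v

lemma hf_add_left {n : ℕ} (u u' v : Fin n → F₄) :
    hf (u + u') v = hf u v + hf u' v := by
  simp [hf, add_mul, Finset.sum_add_distrib]

lemma hf_add_right {n : ℕ} (u v v' : Fin n → F₄) :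
    hf u (v + v') = hf u v + hf u v' := by
  simp only [hf, Pi.add_apply]
  rw [← Finset.sum_add_distrib]
  refine Finset.sum_congr rfl fun i _ => ?_
  have : (v i + v' i) ^ 2 = (v i) ^ 2 + (v' i) ^ 2 := by
    linear_combination F4add_self (v i * v' i)
  rw [this, mul_add]

lemma hf_smul_left {n : ℕ} (a : F₄) (u v : Fin n → F₄) :
    hf (a • u) v = a * hf u v := by
  simp [hf, Finset.mul_sum, mul_assoc]

lemma hf_smul_right {n : ℕ} (a : F₄) (u v : Fin n → F₄) :
    hf u (a • v) = a ^ 2 * hf u v := by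
  simp only [hf, Pi.smul_apply, smul_eq_mul, mul_pow, Finset.mul_sum]
  exact Finset.sum_congr rfl fun i _ => by ring

lemma hf_swap {n : ℕ} (u v : Fin n → F₄) : hf v u = (hf u v) ^ 2 := by
  simp only [hf]
  rw [sum_pow_char (p := 2)]
  refine Finset.sum_congr rfl fun i _ => ?_
  have h4 := F4pow4 (v i)
  linear_combination (-(u i ^ 2)) * h4

lemma hf_zero_left {n : ℕ} (v : Fin n → F₄) : hf 0 v = 0 := by simp [hf]

lemma hf_sum_left {n : ℕ} {ι : Type*} (s : Finset ι) (f : ι → (Fin n → F₄)) (w : Fin n → F₄) :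
    hf (∑ i ∈ s, f i) w = ∑ i ∈ s, hf (f i) w := by
  classical
  induction s using Finset.induction with
  | empty => simp [hf_zero_left]
  | @insert a s' h ih => rw [Finset.sum_insert h, hf_add_left, ih, Finset.sum_insert h]

lemma hf_zero_right {n : ℕ} (v : Fin n → F₄) : hf v 0 = 0 := by simp [hf]

lemma hf_sum_right {n : ℕ} {ι : Type*} (s : Finset ι) (f : ι → (Fin n → F₄)) (w : Fin n → F₄) :
    hf w (∑ i ∈ s, f i) = ∑ i ∈ s, hf w (f i) := by
  classical
  induction s using Finset.induction with
  | empty => simp [hf_zero_right]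
  | @insert a s' h ih => rw [Finset.sum_insert h, hf_add_right, ih, Finset.sum_insert h]

/-- Finset version of the Hamming weight. -/
noncomputable def wtF {n : ℕ} (v : Fin n → F₄) : ℕ :=
  (Finset.univ.filter fun i => v i ≠ 0).card

lemma wt_eq_wtF {n : ℕ} (v : Fin n → F₄) : wt v = wtF v := by
  rw [wt, wtF, Set.ncard_eq_toFinset_card']
  congr 1
  ext i
  simp

lemma qf_eq_cast {n : ℕ} (v : Fin n → F₄) : qf v = (wtF v : F₄) := by
  rw [qf, hf, wtF]
  rw [Finset.card_filter, Nat.cast_sum]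
  refine Finset.sum_congr rfl fun i _ => ?_
  rcases eq_or_ne (v i) 0 with h | h
  · rw [if_neg (by simpa using h), h]
    simp
  · have h3 : (v i) ^ 3 = 1 := F4pow3 h
    rw [if_pos h, Nat.cast_one]
    linear_combination h3

lemma qf_zero_iff_even {n : ℕ} (v : Fin n → F₄) : qf v = 0 ↔ Even (wt v) := by
  rw [qf_eq_cast, wt_eq_wtF]
  rw [CharP.cast_eq_zero_iff F₄ 2 (wtF v)]
  exact ⟨fun h => (even_iff_two_dvd).2 h, fun h => (even_iff_two_dvd).1 h⟩

lemma qf01 {n : ℕ} (v : Fin n → F₄) : qf v = 0 ∨ qf v = 1 := by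
  rw [qf_eq_cast]
  rcases Nat.even_or_odd (wtF v) with ⟨t, ht⟩ | ⟨t, ht⟩
  · left
    rw [ht]
    push_cast
    have : (2 : F₄) = 0 := by exact_mod_cast CharP.cast_eq_zero F₄ 2
    linear_combination (t : F₄) * this
  · right
    rw [ht]
    push_cast
    have : (2 : F₄) = 0 := by exact_mod_cast CharP.cast_eq_zero F₄ 2
    linear_combination (t : F₄) * this

/-- Integer count of isotropic vectors. -/
noncomputable def NisoZ (m : ℕ) : ℤ :=
  ∑ v : Fin m → F₄, if qf v = 0 then (1 : ℤ) else 0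

lemma qf_cons (m : ℕ) (a : F₄) (x : Fin m → F₄) :
    qf (Fin.cons a x) = a * a ^ 2 + qf x := by
  simp only [qf, hf]
  rw [Fin.sum_univ_succ]
  simp

lemma NisoZ_succ (m : ℕ) : NisoZ (m + 1) = 3 * 4 ^ m - 2 * NisoZ m := by
  classical
  have key : NisoZ (m + 1)
      = ∑ p : F₄ × (Fin m → F₄), if qf (Fin.cons p.1 p.2) = 0 then (1 : ℤ) else 0 := by
    rw [NisoZ]
    exact (Fintype.sum_equiv (Fin.consEquiv fun _ => F₄) _ _ (fun p => by rfl)).symm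
  rw [key, Fintype.sum_prod_type]
  have hsplit : ∀ a : F₄, (∑ x : Fin m → F₄, if qf (Fin.cons a x) = 0 then (1 : ℤ) else 0)
      = if a = 0 then NisoZ m else (∑ x : Fin m → F₄, if qf x = 1 then (1 : ℤ) else 0) := by
    intro a
    rcases eq_or_ne a 0 with h | h
    · rw [if_pos h, NisoZ]
      refine Finset.sum_congr rfl fun x _ => ?_
      rw [qf_cons, h]
      norm_num
    · rw [if_neg h]
      refine Finset.sum_congr rfl fun x _ => ?_
      have h3 : a * a ^ 2 = 1 := by
        have := F4pow3 h
        linear_combination this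
      rw [qf_cons, h3]
      congr 1
      simp only [eq_iff_iff]
      constructor
      · intro hq
        have : qf x = -1 := by linear_combination hq
        rw [this]
        linear_combination -(F4add_self 1)
      · intro hq
        rw [hq]
        exact F4add_self 1
  have hcomp : ∑ x : Fin m → F₄, ((if qf x = 0 then (1 : ℤ) else 0) + (if qf x = 1 then (1 : ℤ) else 0)) = 4 ^ m := by
    have hone : ∀ x : Fin m → F₄, ((if qf x = 0 then (1 : ℤ) else 0) + (if qf x = 1 then (1 : ℤ) else 0)) = 1 := by
      intro x
      rcases qf01 x with h | h
      · rw [if_pos h, if_neg (by rw [h]; exact zero_ne_one), add_zero]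
      · rw [if_pos h, if_neg (by rw [h]; exact one_ne_zero), zero_add]
    rw [Finset.sum_congr rfl fun x _ => hone x]
    rw [Finset.sum_const, Finset.card_univ, Fintype.card_fun]
    rw [F4card, Fintype.card_fin]
    simp
  have h1 : ∑ x : Fin m → F₄, (if qf x = 1 then (1 : ℤ) else 0) = 4 ^ m - NisoZ m := by
    rw [Finset.sum_add_distrib] at hcomp
    rw [NisoZ]
    omega
  rw [Finset.sum_congr rfl fun a _ => hsplit a]
  have huniv : (Finset.univ : Finset F₄) = insert 0 (Finset.univ.filter (· ≠ 0)) := by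
    ext a
    simp only [Finset.mem_insert, Finset.mem_filter, Finset.mem_univ, true_and]
    constructor
    · intro _
      rcases eq_or_ne a 0 with h | h
      · exact Or.inl h
      · exact Or.inr h
    · intro _; trivial
  rw [huniv, Finset.sum_insert (by simp)]
  rw [if_pos rfl]
  have hcard3 : (Finset.univ.filter (· ≠ (0:F₄))).card = 3 := by
    have : (Finset.univ.filter (· ≠ (0:F₄))).card = Fintype.card F₄ - 1 := by
      rw [Finset.filter_ne']
      rw [Finset.card_erase_of_mem (Finset.mem_univ _), Finset.card_univ]
    rw [this, F4card]
  rw [Finset.sum_congr rfl fun a ha => if_neg (Finset.mem_filter.1 ha).2]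
  rw [Finset.sum_const, hcard3, h1]
  push_cast
  ring

lemma NisoZ_formula (m : ℕ) : 2 * NisoZ m = 4 ^ m + (-2) ^ m := by
  induction m with
  | zero =>
    rw [NisoZ]
    simp [qf, hf]
  | succ m ih =>
    rw [NisoZ_succ]
    have : (4 : ℤ) ^ (m + 1) + (-2) ^ (m + 1) = 6 * 4 ^ m - 2 * (4 ^ m + (-2) ^ m) := by ring
    rw [this, ← ih]
    ring

/-- `x ↦ hf x v` as a linear map. -/
noncomputable def hfl {n : ℕ} (v : Fin n → F₄) : (Fin n → F₄) →ₗ[F₄] F₄ where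
  toFun x := hf x v
  map_add' x y := hf_add_left x y v
  map_smul' a x := by simp [hf_smul_left]

@[simp] lemma hfl_apply {n : ℕ} (v x : Fin n → F₄) : hfl v x = hf x v := rfl

lemma hf_single_right {n : ℕ} (x : Fin n → F₄) (i : Fin n) :
    hf x (Pi.single i 1) = x i := by
  simp only [hf]
  rw [Finset.sum_eq_single i]
  · simp
  · intro j _ hj
    rw [Pi.single_apply, if_neg hj]
    ring
  · simp

lemma hf_nondeg {n : ℕ} (x : Fin n → F₄) (h : ∀ y, hf x y = 0) : x = 0 := by
  funext i
  have := h (Pi.single i 1)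
  rwa [hf_single_right] at this

lemma qf_add {n : ℕ} (x z : Fin n → F₄) :
    qf (x + z) = qf x + qf z + hf x z + (hf x z) ^ 2 := by
  simp only [qf]
  rw [hf_add_left, hf_add_right, hf_add_right, hf_swap x z]
  ring

lemma qf_smul {n : ℕ} (a : F₄) (x : Fin n → F₄) : qf (a • x) = a ^ 3 * qf x := by
  simp only [qf]
  rw [hf_smul_left, hf_smul_right]
  ring

lemma polarization {n : ℕ} (x z : Fin n → F₄) (hx : qf x = 0) (hz : qf z = 0)
    (h1 : qf (x + z) = 0) (h2 : ∀ a : F₄, qf (x + a • z) = 0) : hf x z = 0 := by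
  obtain ⟨ω, hω⟩ := F4omega
  set t := hf x z with ht
  have e1 : t + t ^ 2 = 0 := by
    have := qf_add x z
    rw [h1, hx, hz] at this
    linear_combination -this
  have e2 : ω ^ 2 * t + ω * t ^ 2 = 0 := by
    have e := qf_add x (ω • z)
    rw [h2 ω, hx, qf_smul, hz, hf_smul_right] at e
    have h' : ω ^ 2 * t + (ω ^ 2 * t) ^ 2 = 0 := by linear_combination -e
    have hsq : (ω ^ 2) ^ 2 = ω := by
      have h4 := F4pow4 ω
      linear_combination h4
    linear_combination h' - t ^ 2 * hsq
  have e3 : t ^ 2 = t := by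
    have := F4add_self t
    linear_combination e1 - this
  linear_combination e2 - ω * e3 - t * hω

lemma polarization' {n : ℕ} (V : Submodule F₄ (Fin n → F₄))
    (h : ∀ x ∈ V, qf x = 0) : ∀ x ∈ V, ∀ z ∈ V, hf x z = 0 := by
  intro x hx z hz
  exact polarization x z (h x hx) (h z hz) (h _ (V.add_mem hx hz))
    (fun a => h _ (V.add_mem hx (V.smul_mem a hz)))

set_option synthInstance.maxHeartbeats 1000000 in
lemma onf {n : ℕ} : ∀ m (V : Submodule F₄ (Fin n → F₄)), Module.finrank F₄ V = m →
    (∀ x ∈ V, (∀ z ∈ V, hf x z = 0) → x = 0) →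
    ∃ c : Fin m → (Fin n → F₄), (∀ j, c j ∈ V) ∧
      ∀ i j, hf (c i) (c j) = if i = j then 1 else 0 := by
  intro m
  induction m with
  | zero => exact fun V _ _ => ⟨Fin.elim0, fun j => j.elim0, fun i => i.elim0⟩
  | succ m ih =>
    intro V hrank hnd
    -- find an anisotropic vector in V
    obtain ⟨x, hxV, hqx⟩ : ∃ x ∈ V, qf x = 1 := by
      by_contra hcon
      push_neg at hcon
      have hall : ∀ x ∈ V, qf x = 0 := by
        intro x hx
        rcases qf01 x with h | h
        · exact h
        · exact absurd h (hcon x hx)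
      have : V = ⊥ := by
        rw [eq_bot_iff]
        intro x hx
        simp only [Submodule.mem_bot]
        exact hnd x hx (fun z hz => polarization' V hall x hx z hz)
      rw [this, finrank_bot] at hrank
      omega
    -- the orthogonal complement of x inside V
    set ψ : V →ₗ[F₄] F₄ := (hfl x).comp V.subtype with hψ
    set V' : Submodule F₄ (Fin n → F₄) := Submodule.map V.subtype (LinearMap.ker ψ) with hV'
    have hV'le : V' ≤ V := by
      rw [hV']
      rintro z ⟨y, _, rfl⟩
      exact y.2
    have hV'mem : ∀ z, z ∈ V' ↔ (z ∈ V ∧ hf z x = 0) := by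
      intro z
      constructor
      · rintro ⟨y, hy, rfl⟩
        exact ⟨y.2, hy⟩
      · rintro ⟨hzV, hzx⟩
        exact ⟨⟨z, hzV⟩, hzx, rfl⟩
    -- ψ is surjective
    have hsurj : LinearMap.range ψ = ⊤ := by
      rw [LinearMap.range_eq_top]
      intro a
      refine ⟨a • ⟨x, hxV⟩, ?_⟩
      show hf (a • x) x = a
      rw [hf_smul_left]
      show a * qf x = a
      rw [hqx, mul_one]
    have hkerrank : Module.finrank F₄ (LinearMap.ker ψ) = m := by
      have := LinearMap.finrank_range_add_finrank_ker ψ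
      rw [hsurj, hrank] at this
      rw [finrank_top, Module.finrank_self] at this
      omega
    have hV'rank : Module.finrank F₄ V' = m := by
      rw [hV']
      rw [← hkerrank]
      exact (Submodule.equivMapOfInjective V.subtype (Submodule.injective_subtype V)
        (LinearMap.ker ψ)).finrank_eq.symm
    -- decomposition of members of V
    have hdecomp : ∀ y ∈ V, y - (hf y x) • x ∈ V' := by
      intro y hy
      rw [hV'mem]
      refine ⟨V.sub_mem hy (V.smul_mem _ hxV), ?_⟩
      rw [sub_eq_add_neg, hf_add_left]
      rw [show -((hf y x) • x) = (-(hf y x)) • x by simp, hf_smul_left]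
      show hf y x + -hf y x * qf x = 0
      rw [hqx]
      ring
    -- V' is nondegenerate
    have hnd' : ∀ z ∈ V', (∀ w ∈ V', hf z w = 0) → z = 0 := by
      intro z hz hzw
      obtain ⟨hzV, hzx⟩ := (hV'mem z).1 hz
      refine hnd z hzV ?_
      intro w hw
      have hw' := hdecomp w hw
      have : hf z w = hf z (w - (hf w x) • x) + hf z ((hf w x) • x) := by
        rw [← hf_add_right]
        congr 1
        abel
      rw [this, hzw _ hw', hf_smul_right, hzx]
      ring
    obtain ⟨c', hc'mem, hc'orth⟩ := ih V' hV'rank hnd'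
    refine ⟨Fin.cons x c', ?_, ?_⟩
    · intro j
      refine Fin.cases ?_ ?_ j
      · exact hxV
      · intro j'
        exact hV'le (hc'mem j')
    · have hcx : ∀ j', hf (c' j') x = 0 := fun j' => ((hV'mem _).1 (hc'mem j')).2
      have hxc : ∀ j', hf x (c' j') = 0 := by
        intro j'
        rw [hf_swap (c' j') x, hcx j']
        ring
      intro i j
      refine Fin.cases ?_ ?_ i
      · refine Fin.cases ?_ ?_ j
        · simpa [qf] using hqx
        · intro j'
          simp only [Fin.cons_zero, Fin.cons_succ]
          rw [hxc j', if_neg (by simp [Fin.ext_iff])]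
      · intro i'
        refine Fin.cases ?_ ?_ j
        · simp only [Fin.cons_zero, Fin.cons_succ]
          rw [hcx i', if_neg (by simp [Fin.ext_iff])]
        · intro j'
          simp only [Fin.cons_succ]
          rw [hc'orth i' j']
          congr 1
          simp [Fin.ext_iff]

lemma qf_single {n : ℕ} (i : Fin n) : qf (Pi.single i (1 : F₄)) = 1 := by
  rw [qf, hf_single_right, Pi.single_eq_same]

lemma exists_hyperbolic {n : ℕ} (v : Fin n → F₄) (hv : v ≠ 0) (hq : qf v = 0) :
    ∃ w : Fin n → F₄, hf w v = 1 ∧ qf w = 0 := by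
  obtain ⟨i, hi⟩ := Function.ne_iff.1 hv
  have hi' : v i ≠ 0 := by simpa using hi
  set c : F₄ := (v i ^ 2)⁻¹ with hc
  have hc0 : c ≠ 0 := inv_ne_zero (pow_ne_zero _ hi')
  set w₁ : Fin n → F₄ := c • (Pi.single i 1 : Fin n → F₄) with hw₁
  have hw₁v : hf w₁ v = 1 := by
    rw [hw₁, hf_smul_left]
    have : hf (Pi.single i 1) v = v i ^ 2 := by
      simp only [hf]
      rw [Finset.sum_eq_single i]
      · simp
      · intro j _ hj
        rw [Pi.single_apply, if_neg hj, zero_mul]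
      · simp
    rw [this, hc]
    field_simp
  have hqw₁ : qf w₁ = 1 := by
    rw [hw₁, qf_smul, qf_single, mul_one]
    exact F4pow3 hc0
  clear_value w₁
  obtain ⟨ω, hω⟩ := F4omega
  refine ⟨w₁ + ω • v, ?_, ?_⟩
  · rw [hf_add_left, hf_smul_left, hw₁v]
    show 1 + ω * qf v = 1
    rw [hq]
    ring
  · rw [qf_add, hqw₁, qf_smul, hq, hf_smul_right]
    rw [show hf w₁ v = 1 from hw₁v]
    have h2 := F4add_self (1 : F₄)
    have h4 := F4pow4 ω
    linear_combination h2 + hω + h4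

/-- The standard Gram matrix: a hyperbolic pair followed by an orthonormal family. -/
noncomputable def Gm {n : ℕ} (i j : Fin n) : F₄ :=
  if (i.val = 0 ∧ j.val = 1) ∨ (i.val = 1 ∧ j.val = 0) ∨ (i.val = j.val ∧ 2 ≤ i.val)
  then 1 else 0

set_option maxHeartbeats 1000000 in
lemma exists_adapted {n : ℕ} (hn : 2 ≤ n) (v : Fin n → F₄) (hv : v ≠ 0) (hqv : qf v = 0) :
    ∃ b : Module.Basis (Fin n) F₄ (Fin n → F₄), b ⟨0, by omega⟩ = v ∧
      ∀ i j, hf (b i) (b j) = Gm i j := by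
  obtain ⟨w, hwv, hqw⟩ := exists_hyperbolic v hv hqv
  have hvw : hf v w = 1 := by
    rw [hf_swap w v, hwv]
    ring
  set V : Submodule F₄ (Fin n → F₄) := LinearMap.ker (hfl v) ⊓ LinearMap.ker (hfl w) with hV
  have hVmem : ∀ z, z ∈ V ↔ hf z v = 0 ∧ hf z w = 0 := by
    intro z
    rw [hV, Submodule.mem_inf, LinearMap.mem_ker, LinearMap.mem_ker]
    rfl
  have hVrank : Module.finrank F₄ V = n - 2 := by
    set φ : (Fin n → F₄) →ₗ[F₄] F₄ × F₄ := (hfl v).prod (hfl w) with hφ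
    have hker : LinearMap.ker φ = V := by rw [hφ, LinearMap.ker_prod, hV]
    have hsurj : LinearMap.range φ = ⊤ := by
      rw [LinearMap.range_eq_top]
      rintro ⟨a, b⟩
      refine ⟨a • w + b • v, ?_⟩
      have h1 : hf (a • w + b • v) v = a := by
        rw [hf_add_left, hf_smul_left, hf_smul_left, hwv]
        show a * 1 + b * qf v = a
        rw [hqv]; ring
      have h2 : hf (a • w + b • v) w = b := by
        rw [hf_add_left, hf_smul_left, hf_smul_left, hvw]
        show a * qf w + b * 1 = b
        rw [hqw]; ring
      show (hf (a • w + b • v) v, hf (a • w + b • v) w) = (a, b)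
      rw [h1, h2]
    have := LinearMap.finrank_range_add_finrank_ker φ
    rw [hsurj, hker, finrank_top] at this
    rw [Module.finrank_prod, Module.finrank_self] at this
    rw [Module.finrank_pi, Fintype.card_fin] at this
    omega
  have hnd : ∀ x ∈ V, (∀ z ∈ V, hf x z = 0) → x = 0 := by
    intro x hx hxz
    obtain ⟨hxv, hxw⟩ := (hVmem x).1 hx
    refine hf_nondeg x ?_
    intro y
    have hy' : y - (hf y w) • v - (hf y v) • w ∈ V := by
      rw [hVmem]
      constructor
      · rw [sub_eq_add_neg, sub_eq_add_neg, hf_add_left, hf_add_left]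
        rw [show -((hf y w) • v) = (-(hf y w)) • v by simp,
            show -((hf y v) • w) = (-(hf y v)) • w by simp,
            hf_smul_left, hf_smul_left, hwv]
        show hf y v + -hf y w * qf v + -hf y v * 1 = 0
        rw [hqv]; ring
      · rw [sub_eq_add_neg, sub_eq_add_neg, hf_add_left, hf_add_left]
        rw [show -((hf y w) • v) = (-(hf y w)) • v by simp,
            show -((hf y v) • w) = (-(hf y v)) • w by simp,
            hf_smul_left, hf_smul_left, hvw]
        show hf y w + -hf y w * 1 + -hf y v * qf w = 0
        rw [hqw]; ring
    have hdec : hf x y = hf x (y - (hf y w) • v - (hf y v) • w)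
        + hf x ((hf y w) • v) + hf x ((hf y v) • w) := by
      rw [← hf_add_right, ← hf_add_right]
      congr 1
      abel
    rw [hdec, hxz _ hy', hf_smul_right, hf_smul_right, hxv, hxw]
    ring
  obtain ⟨c, hcV, hcorth⟩ := onf (n - 2) V hVrank hnd
  have hcv : ∀ j, hf (c j) v = 0 := fun j => ((hVmem _).1 (hcV j)).1
  have hcw : ∀ j, hf (c j) w = 0 := fun j => ((hVmem _).1 (hcV j)).2
  have hvc : ∀ j, hf v (c j) = 0 := fun j => by rw [hf_swap (c j) v, hcv j]; ring
  have hwc : ∀ j, hf w (c j) = 0 := fun j => by rw [hf_swap (c j) w, hcw j]; ring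
  have hxv0 : hf v v = 0 := hqv
  have hxw0 : hf w w = 0 := hqw
  -- assemble the family
  have main : ∃ t : Fin n → (Fin n → F₄), t ⟨0, by omega⟩ = v ∧
      ∀ i j, hf (t i) (t j) = Gm i j := by
    refine ⟨fun i => if h0 : i.val = 0 then v else if h1 : i.val = 1 then w
      else c ⟨i.val - 2, by have := i.isLt; omega⟩, by simp, ?_⟩
    intro i j
    by_cases hi0 : i.val = 0 <;> by_cases hj0 : j.val = 0
    · simp only [dif_pos hi0, dif_pos hj0, Gm]
      rw [if_neg (by omega), hxv0]
    · by_cases hj1 : j.val = 1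
      · simp only [dif_pos hi0, dif_neg hj0, dif_pos hj1, Gm]
        rw [if_pos (by omega), hvw]
      · simp only [dif_pos hi0, dif_neg hj0, dif_neg hj1, Gm]
        rw [if_neg (by omega), hvc]
    · by_cases hi1 : i.val = 1
      · simp only [dif_neg hi0, dif_pos hi1, dif_pos hj0, Gm]
        rw [if_pos (by omega), hwv]
      · simp only [dif_neg hi0, dif_neg hi1, dif_pos hj0, Gm]
        rw [if_neg (by omega), hcv]
    · by_cases hi1 : i.val = 1 <;> by_cases hj1 : j.val = 1
      · simp only [dif_neg hi0, dif_pos hi1, dif_neg hj0, dif_pos hj1, Gm]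
        rw [if_neg (by omega), hxw0]
      · simp only [dif_neg hi0, dif_pos hi1, dif_neg hj0, dif_neg hj1, Gm]
        rw [if_neg (by omega), hwc]
      · simp only [dif_neg hi0, dif_neg hi1, dif_neg hj0, dif_pos hj1, Gm]
        rw [if_neg (by omega), hcw]
      · simp only [dif_neg hi0, dif_neg hi1, dif_neg hj0, dif_neg hj1, Gm]
        rw [hcorth]
        by_cases hij : i.val = j.val
        · rw [if_pos (by rw [Fin.ext_iff]; simp; omega), if_pos (by omega)]
        · rw [if_neg (by rw [Fin.ext_iff]; simp; omega), if_neg (by omega)]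
  obtain ⟨t, ht0, htgram⟩ := main
  -- linear independence
  have hli : LinearIndependent F₄ t := by
    rw [Fintype.linearIndependent_iff]
    intro g hg i
    have key : ∀ j : Fin n, ∑ i', g i' * Gm i' j = 0 := by
      intro j
      have : hf (∑ i', g i' • t i') (t j) = 0 := by rw [hg, hf_zero_left]
      rw [hf_sum_left] at this
      rw [← this]
      refine Finset.sum_congr rfl fun i' _ => ?_
      rw [hf_smul_left, htgram]
    have hilt := i.isLt
    by_cases hi0 : i.val = 0
    · have := key ⟨1, by omega⟩
      rw [Finset.sum_eq_single i] at this
      · rw [Gm, if_pos (by simp; omega)] at this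
        rwa [mul_one] at this
      · intro i' _ hne
        rw [Gm, if_neg (by simp; omega), mul_zero]
      · simp
    · by_cases hi1 : i.val = 1
      · have := key ⟨0, by omega⟩
        rw [Finset.sum_eq_single i] at this
        · rw [Gm, if_pos (by simp; omega)] at this
          rwa [mul_one] at this
        · intro i' _ hne
          rw [Gm, if_neg ?_, mul_zero]
          simp only [not_or, not_and]
          refine ⟨fun _ => by omega, fun h => ?_, fun h => by omega⟩
          exact absurd (Fin.ext (by omega : i'.val = i.val)) hne
        · simp
      · have := key i
        rw [Finset.sum_eq_single i] at this
        · rw [Gm, if_pos (by omega)] at this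
          rwa [mul_one] at this
        · intro i' _ hne
          rw [Gm, if_neg ?_, mul_zero]
          simp only [not_or, not_and]
          refine ⟨fun h => by omega, fun h => by omega, fun h => ?_⟩
          exact absurd (Fin.ext h) hne
        · simp
  have : Nonempty (Fin n) := ⟨⟨0, by omega⟩⟩
  have hcard : Fintype.card (Fin n) = Module.finrank F₄ (Fin n → F₄) := by
    rw [Fintype.card_fin, Module.finrank_pi, Fintype.card_fin]
  refine ⟨basisOfLinearIndependentOfCardEqFinrank hli hcard, ?_, ?_⟩
  · rw [coe_basisOfLinearIndependentOfCardEqFinrank]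
    exact ht0
  · intro i j
    have hco := coe_basisOfLinearIndependentOfCardEqFinrank hli hcard
    rw [show (basisOfLinearIndependentOfCardEqFinrank hli hcard) i = t i from by rw [hco],
        show (basisOfLinearIndependentOfCardEqFinrank hli hcard) j = t j from by rw [hco]]
    exact htgram i j

lemma hf_expand {n m : ℕ} (p : Fin m → (Fin n → F₄)) (G : Fin m → Fin m → F₄)
    (hp : ∀ i j, hf (p i) (p j) = G i j) (a c : Fin m → F₄) :
    hf (∑ i, a i • p i) (∑ j, c j • p j) = ∑ i, ∑ j, a i * (c j) ^ 2 * G i j := by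
  rw [hf_sum_left]
  refine Finset.sum_congr rfl fun i _ => ?_
  rw [hf_smul_left, hf_sum_right, Finset.mul_sum]
  refine Finset.sum_congr rfl fun j _ => ?_
  rw [hf_smul_right, hp]
  ring

lemma exists_isometry {n : ℕ} (hn : 2 ≤ n) (v u : Fin n → F₄) (hv : v ≠ 0) (hu : u ≠ 0)
    (hqv : qf v = 0) (hqu : qf u = 0) :
    ∃ g : (Fin n → F₄) ≃ₗ[F₄] (Fin n → F₄), g v = u ∧ ∀ x y, hf (g x) (g y) = hf x y := by
  obtain ⟨b, hb0, hbg⟩ := exists_adapted hn v hv hqv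
  obtain ⟨b', hb'0, hb'g⟩ := exists_adapted hn u hu hqu
  refine ⟨b.equiv b' (Equiv.refl _), ?_, ?_⟩
  · rw [← hb0, Module.Basis.equiv_apply, Equiv.refl_apply, hb'0]
  · intro x y
    have hx := b.sum_repr x
    have hy := b.sum_repr y
    have hgx : (b.equiv b' (Equiv.refl _)) x = ∑ i, b.repr x i • b' i := by
      conv_lhs => rw [← hx]
      rw [map_sum]
      refine Finset.sum_congr rfl fun i _ => ?_
      rw [LinearEquiv.map_smul, Module.Basis.equiv_apply, Equiv.refl_apply]
    have hgy : (b.equiv b' (Equiv.refl _)) y = ∑ i, b.repr y i • b' i := by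
      conv_lhs => rw [← hy]
      rw [map_sum]
      refine Finset.sum_congr rfl fun i _ => ?_
      rw [LinearEquiv.map_smul, Module.Basis.equiv_apply, Equiv.refl_apply]
    rw [hgx, hgy, hf_expand b' Gm hb'g]
    conv_rhs => rw [← hx, ← hy]
    rw [hf_expand b Gm hbg]

noncomputable instance {n : ℕ} : Fintype (Submodule F₄ (Fin n → F₄)) := by
  have : Finite (Submodule F₄ (Fin n → F₄)) :=
    Finite.of_injective (fun C => (C : Set (Fin n → F₄))) SetLike.coe_injective
  exact Fintype.ofFinite _

attribute [local instance] Classical.propDecidable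

open Finset in
lemma Bw_eq_card {n : ℕ} (i : ℕ) (C : Submodule F₄ (Fin n → F₄)) :
    Bw i (C : Set (Fin n → F₄)) = (univ.filter fun v => v ∈ C ∧ wt v = i).card := by
  rw [Bw, Set.ncard_eq_toFinset_card']
  refine congrArg Finset.card ?_
  ext v
  simp [Set.mem_toFinset]

open Finset in
lemma card_submodule {n k : ℕ} (C : Submodule F₄ (Fin n → F₄))
    (hC : Module.finrank F₄ C = k) :
    (univ.filter fun v => v ∈ C).card = 4 ^ k := by
  have h1 : (univ.filter fun v => v ∈ C).card = Fintype.card C := by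
    rw [Fintype.card_subtype]
  rw [h1]
  have := Module.card_eq_pow_finrank (K := F₄) (V := C)
  rw [F4card, hC] at this
  exact this

open Finset in
lemma card_weight_sphere {n i : ℕ} :
    (univ.filter fun v : Fin n → F₄ => wt v = i).card ≤ n.choose i * 3 ^ i := by
  have hsub : (univ.filter fun v : Fin n → F₄ => wt v = i) ⊆
      (univ.powersetCard i).biUnion
        (fun s => univ.filter fun v : Fin n → F₄ =>
          (univ.filter fun j => v j ≠ 0) = s) := by
    intro v hv
    rw [mem_filter] at hv
    rw [mem_biUnion]
    refine ⟨univ.filter fun j => v j ≠ 0, ?_, ?_⟩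
    · rw [mem_powersetCard]
      refine ⟨subset_univ _, ?_⟩
      have := hv.2
      rw [wt_eq_wtF, wtF] at this
      rw [← this]
    · rw [mem_filter]
      exact ⟨mem_univ _, rfl⟩
  refine (card_le_card hsub).trans ?_
  refine (card_biUnion_le).trans ?_
  have hcard : ∀ s ∈ univ.powersetCard i,
      (univ.filter fun v : Fin n → F₄ => (univ.filter fun j => v j ≠ 0) = s).card ≤ 3 ^ i := by
    intro s hs
    rw [mem_powersetCard] at hs
    have hs2 := hs.2
    have hle : (univ.filter fun v : Fin n → F₄ => (univ.filter fun j => v j ≠ 0) = s).card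
        ≤ Fintype.card ((j : {x // x ∈ s}) → {x : F₄ // x ≠ 0}) := by
      rw [← Finset.card_univ (α := ((j : {x // x ∈ s}) → {x : F₄ // x ≠ 0}))]
      refine Finset.card_le_card_of_injOn
        (fun v => fun j => ⟨if h : v j.1 ≠ 0 then v j.1 else 1, by split_ifs with h; exacts [h, one_ne_zero]⟩)
        (fun v _ => mem_univ _) ?_
      intro v hv v' hv' heq
      rw [mem_coe, mem_filter] at hv hv'
      funext j
      by_cases hj : j ∈ s
      · have hvj : v j ≠ 0 := by
          have : j ∈ univ.filter fun j => v j ≠ 0 := by rw [hv.2]; exact hj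
          exact (mem_filter.1 this).2
        have hvj' : v' j ≠ 0 := by
          have : j ∈ univ.filter fun j => v' j ≠ 0 := by rw [hv'.2]; exact hj
          exact (mem_filter.1 this).2
        have := congrFun heq ⟨j, hj⟩
        simp only [Subtype.mk.injEq, dif_pos hvj, dif_pos hvj'] at this
        exact this
      · have h1 : v j = 0 := by
          by_contra h
          exact hj (hv.2 ▸ mem_filter.2 ⟨mem_univ _, h⟩)
        have h2 : v' j = 0 := by
          by_contra h
          exact hj (hv'.2 ▸ mem_filter.2 ⟨mem_univ _, h⟩)
        rw [h1, h2]
    refine hle.trans ?_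
    rw [Fintype.card_fun]
    have hc3 : Fintype.card {x : F₄ // x ≠ 0} = 3 := by
      have := Fintype.card_subtype_compl (p := fun x : F₄ => x = 0)
      rw [F4card] at this
      simp only [Fintype.card_subtype_eq] at this
      exact this
    rw [hc3, Fintype.card_coe, hs2]
  calc ∑ s ∈ univ.powersetCard i,
        (univ.filter fun v : Fin n → F₄ => (univ.filter fun j => v j ≠ 0) = s).card
      ≤ ∑ s ∈ univ.powersetCard i, 3 ^ i := Finset.sum_le_sum hcard
    _ = (univ.powersetCard i).card * 3 ^ i := by rw [Finset.sum_const, smul_eq_mul]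
    _ ≤ n.choose i * 3 ^ i := by
        rw [Finset.card_powersetCard, Finset.card_univ, Fintype.card_fin]

open Finset in
lemma Nv_bound {n k : ℕ} (hn : 2 ≤ n) (v : Fin n → F₄) (hv : v ≠ 0) (hqv : qf v = 0) :
    (univ.filter fun u : Fin n → F₄ => qf u = 0 ∧ u ≠ 0).card *
      ((Snk n k).toFinset.filter fun C => v ∈ C).card
    ≤ (4 ^ k - 1) * (Snk n k).toFinset.card := by
  set SF := (Snk n k).toFinset with hSF
  set I := univ.filter fun u : Fin n → F₄ => qf u = 0 ∧ u ≠ 0 with hI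
  have Hex : ∀ u : Fin n → F₄, ∃ g : (Fin n → F₄) ≃ₗ[F₄] (Fin n → F₄),
      (qf u = 0 ∧ u ≠ 0) → (g v = u ∧ ∀ x y, hf (g x) (g y) = hf x y) := by
    intro u
    by_cases h : qf u = 0 ∧ u ≠ 0
    · obtain ⟨g, h1, h2⟩ := exists_isometry hn v u hv h.2 hqv h.1
      exact ⟨g, fun _ => ⟨h1, h2⟩⟩
    · exact ⟨LinearEquiv.refl _ _, fun h' => absurd h' h⟩
  choose g hg using Hex
  have key : (I ×ˢ (SF.filter fun C => v ∈ C)).card ≤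
      (SF.sigma fun C => univ.filter fun u => u ∈ C ∧ u ≠ 0).card := by
    refine Finset.card_le_card_of_injOn
      (fun p => ⟨Submodule.map (g p.1).toLinearMap p.2, p.1⟩) ?_ ?_
    · rintro ⟨u, C⟩ hp
      rw [mem_coe, mem_product] at hp
      obtain ⟨huI, hC⟩ := hp
      rw [hI, mem_filter] at huI
      obtain ⟨-, hqu, hu0⟩ := huI
      rw [mem_filter] at hC
      obtain ⟨hCS, hvC⟩ := hC
      obtain ⟨hgv, hgpres⟩ := hg u ⟨hqu, hu0⟩
      dsimp only
      rw [mem_coe, mem_sigma]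
      rw [hSF, Set.mem_toFinset] at hCS ⊢
      obtain ⟨hrank, heven⟩ := hCS
      refine ⟨⟨?_, ?_⟩, ?_⟩
      · rw [LinearEquiv.finrank_map_eq]
        exact hrank
      · rintro x ⟨y, hy, rfl⟩
        rw [← qf_zero_iff_even]
        show hf ((g u) y) ((g u) y) = 0
        rw [hgpres]
        exact (qf_zero_iff_even y).2 (heven y hy)
      · rw [mem_filter]
        refine ⟨mem_univ _, ?_, hu0⟩
        have hmm : (g u) v ∈ Submodule.map ((g u) : (Fin n → F₄) →ₗ[F₄] (Fin n → F₄)) C :=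
          Submodule.mem_map_of_mem hvC
        rwa [hgv] at hmm
    · rintro ⟨u, C⟩ hp ⟨u', C'⟩ hp' heq
      dsimp only at heq
      rw [Sigma.mk.inj_iff] at heq
      obtain ⟨heq1, heq2⟩ := heq
      have hu : u = u' := eq_of_heq heq2
      subst hu
      have hC : C = C' :=
        Submodule.map_injective_of_injective (g u).injective heq1
      rw [hC]
  rw [card_product, card_sigma] at key
  have hterm : ∀ C ∈ SF, (univ.filter fun u => u ∈ C ∧ u ≠ 0).card = 4 ^ k - 1 := by
    intro C hC
    rw [hSF, Set.mem_toFinset] at hC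
    have h4 := card_submodule C hC.1
    have hrw : (univ.filter fun u => u ∈ C ∧ u ≠ 0)
        = (univ.filter fun u => u ∈ C).erase 0 := by
      rw [← filter_filter, filter_ne']
    rw [hrw, card_erase_of_mem (mem_filter.2 ⟨mem_univ _, C.zero_mem⟩), h4]
  rw [Finset.sum_congr rfl hterm, Finset.sum_const, smul_eq_mul, mul_comm] at key
  calc I.card * (SF.filter fun C => v ∈ C).card
      = (SF.filter fun C => v ∈ C).card * I.card := mul_comm _ _
    _ ≤ SF.card * (4 ^ k - 1) := key
    _ = (4 ^ k - 1) * SF.card := mul_comm _ _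

lemma wt_zero {n : ℕ} : wt (0 : Fin n → F₄) = 0 := by
  rw [wt_eq_wtF, wtF]
  simp

lemma qf_zero' {n : ℕ} : qf (0 : Fin n → F₄) = 0 := hf_zero_left 0

lemma aux_pow {n : ℕ} (hn : 3 ≤ n) : 2 ^ n + 2 < 4 ^ (n - 1) := by
  obtain ⟨m, rfl⟩ : ∃ m, n = m + 1 := ⟨n - 1, by omega⟩
  have hm : 2 ≤ m := by omega
  have h4 : 4 ^ m = 2 ^ m * 2 ^ m := by
    rw [show (4 : ℕ) = 2 * 2 from rfl, mul_pow]
  have hge : 4 ≤ 2 ^ m := by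
    calc (4 : ℕ) = 2 ^ 2 := rfl
    _ ≤ 2 ^ m := Nat.pow_le_pow_right (by norm_num) hm
  have h2n : 2 ^ (m + 1) = 2 * 2 ^ m := by rw [pow_succ]; ring
  simp only [Nat.add_sub_cancel]
  rw [h2n, h4]
  nlinarith

lemma D_pos {n : ℕ} (hn : 2 ≤ n) : 0 < ((4 : ℚ) ^ (n - 1) + (-2 : ℚ) ^ n) / 2 - 1 := by
  have key : (2 : ℚ) < (4 : ℚ) ^ (n - 1) + (-2 : ℚ) ^ n := by
    rcases eq_or_lt_of_le hn with h | h
    · rw [← h]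
      norm_num
    · have hn3 : 3 ≤ n := h
      have h1 : (-(2 : ℚ)) ^ n ≥ -(2 ^ n) := by
        rcases Nat.even_or_odd n with he | ho
        · rw [he.neg_pow]
          have : (0 : ℚ) < 2 ^ n := by positivity
          linarith
        · rw [ho.neg_pow]
      have h2 : (2 : ℚ) ^ n + 2 < 4 ^ (n - 1) := by
        have := aux_pow hn3
        have hc : ((2 ^ n + 2 : ℕ) : ℚ) < ((4 ^ (n - 1) : ℕ) : ℚ) := by
          exact_mod_cast this
        push_cast at hc
        linarith
      calc (2 : ℚ) < 4 ^ (n - 1) - 2 ^ n := by linarith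
      _ ≤ 4 ^ (n - 1) + (-2 : ℚ) ^ n := by
          have : (-2 : ℚ) ^ n = (-(2 : ℚ)) ^ n := by norm_num
          rw [this]
          linarith
  linarith

open Finset in
lemma Icard_ge {n : ℕ} (hn : 2 ≤ n) :
    ((4 : ℚ) ^ (n - 1) + (-2 : ℚ) ^ n) / 2 - 1
      ≤ ((univ.filter fun u : Fin n → F₄ => qf u = 0 ∧ u ≠ 0).card : ℚ) := by
  have hA : ((univ.filter fun u : Fin n → F₄ => qf u = 0).card : ℤ) = NisoZ n := by
    rw [NisoZ, Finset.card_filter]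
    push_cast
    rfl
  have hI : (univ.filter fun u : Fin n → F₄ => qf u = 0 ∧ u ≠ 0)
      = (univ.filter fun u : Fin n → F₄ => qf u = 0).erase 0 := by
    rw [← filter_filter, filter_ne']
  have h0mem : (0 : Fin n → F₄) ∈ univ.filter fun u : Fin n → F₄ => qf u = 0 :=
    mem_filter.2 ⟨mem_univ _, qf_zero'⟩
  have hcard : ((univ.filter fun u : Fin n → F₄ => qf u = 0 ∧ u ≠ 0).card : ℤ)
      = NisoZ n - 1 := by
    rw [hI, card_erase_of_mem h0mem]
    rw [← hA]
    have : 1 ≤ (univ.filter fun u : Fin n → F₄ => qf u = 0).card :=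
      card_pos.2 ⟨0, h0mem⟩
    push_cast [Nat.cast_sub this]
    ring
  have hform := NisoZ_formula n
  -- 2 * NisoZ n = 4^n + (-2)^n
  have hcast : ((univ.filter fun u : Fin n → F₄ => qf u = 0 ∧ u ≠ 0).card : ℚ)
      = ((NisoZ n : ℚ) - 1) := by
    exact_mod_cast congrArg (fun z : ℤ => (z : ℚ)) hcard
  rw [hcast]
  have h2 : (2 : ℚ) * (NisoZ n : ℚ) = 4 ^ n + (-2) ^ n := by
    exact_mod_cast congrArg (fun z : ℤ => (z : ℚ)) hform
  have h4 : (4 : ℚ) ^ (n - 1) ≤ 4 ^ n := by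
    apply pow_le_pow_right₀ (by norm_num)
    omega
  linarith

open Finset in
lemma sum_Bw_bound {n k : ℕ} (hn : 2 ≤ n) (hk : 1 ≤ k) (i : ℕ) (hi1 : 1 ≤ i) (hin : i ≤ n) :
    (∑ C ∈ (Snk n k).toFinset, (Bw i (C : Set (Fin n → F₄)) : ℚ))
      ≤ ((Snk n k).toFinset.card : ℚ) * tildeB n k i := by
  set SF := (Snk n k).toFinset with hSF
  set D : ℚ := ((4 : ℚ) ^ (n - 1) + (-2 : ℚ) ^ n) / 2 - 1 with hD
  have hDpos : 0 < D := D_pos hn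
  set bnd : ℚ := ((4 : ℚ) ^ k - 1) * (SF.card : ℚ) / D with hbnd
  have hbnd0 : 0 ≤ bnd := by
    rw [hbnd]
    have h1 : (1 : ℚ) ≤ 4 ^ k := one_le_pow₀ (by norm_num)
    have h2 : (0 : ℚ) ≤ (SF.card : ℚ) := by positivity
    have h3 : (0 : ℚ) ≤ (4 : ℚ) ^ k - 1 := by linarith
    positivity
  -- double counting
  have hdc : (∑ C ∈ SF, (Bw i (C : Set (Fin n → F₄)) : ℚ))
      = ∑ v ∈ univ.filter (fun v : Fin n → F₄ => wt v = i),
          ((SF.filter fun C => v ∈ C).card : ℚ) := by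
    have : ∀ C ∈ SF, (Bw i (C : Set (Fin n → F₄)) : ℚ)
        = ∑ v ∈ univ.filter (fun v : Fin n → F₄ => wt v = i),
            (if v ∈ C then (1 : ℚ) else 0) := by
      intro C _
      rw [Bw_eq_card, Finset.card_filter]
      push_cast
      rw [Finset.sum_filter]
      refine Finset.sum_congr rfl fun v _ => ?_
      by_cases h1 : v ∈ C <;> by_cases h2 : wt v = i <;> simp [h1, h2]
    rw [Finset.sum_congr rfl this, Finset.sum_comm]
    refine Finset.sum_congr rfl fun v _ => ?_
    rw [Finset.card_filter]
    push_cast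
    rfl
  rw [hdc]
  -- per-vector bound
  have hper : ∀ v ∈ univ.filter (fun v : Fin n → F₄ => wt v = i),
      ((SF.filter fun C => v ∈ C).card : ℚ) ≤ bnd := by
    intro v hv
    rw [mem_filter] at hv
    have hwti := hv.2
    have hv0 : v ≠ 0 := by
      intro h
      rw [h, wt_zero] at hwti
      omega
    by_cases hqv : qf v = 0
    · have hkey := Nv_bound (k := k) hn v hv0 hqv
      have hIc := Icard_ge (n := n) hn
      have hc1 : (1 : ℕ) ≤ 4 ^ k := Nat.one_le_two_pow.trans (Nat.pow_le_pow_left (by norm_num) k)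
      have hkeyQ : ((univ.filter fun u : Fin n → F₄ => qf u = 0 ∧ u ≠ 0).card : ℚ) *
          ((SF.filter fun C => v ∈ C).card : ℚ) ≤ ((4 : ℚ) ^ k - 1) * (SF.card : ℚ) := by
        have := hkey
        have hcast : (((univ.filter fun u : Fin n → F₄ => qf u = 0 ∧ u ≠ 0).card *
            ((Snk n k).toFinset.filter fun C => v ∈ C).card : ℕ) : ℚ)
            ≤ (((4 ^ k - 1) * (Snk n k).toFinset.card : ℕ) : ℚ) := by exact_mod_cast this
        push_cast [Nat.cast_sub hc1] at hcast
        exact_mod_cast hcast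
      have hNv0 : (0 : ℚ) ≤ ((SF.filter fun C => v ∈ C).card : ℚ) := by positivity
      have hDle : D * ((SF.filter fun C => v ∈ C).card : ℚ)
          ≤ ((4 : ℚ) ^ k - 1) * (SF.card : ℚ) := by
        calc D * ((SF.filter fun C => v ∈ C).card : ℚ)
            ≤ ((univ.filter fun u : Fin n → F₄ => qf u = 0 ∧ u ≠ 0).card : ℚ) *
              ((SF.filter fun C => v ∈ C).card : ℚ) := by
              exact mul_le_mul_of_nonneg_right hIc hNv0
          _ ≤ _ := hkeyQ
      rw [hbnd, le_div_iff₀ hDpos]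
      linarith [hDle]
    · have : (SF.filter fun C => v ∈ C) = ∅ := by
        rw [Finset.filter_eq_empty_iff]
        intro C hC
        rw [hSF, Set.mem_toFinset] at hC
        intro hvC
        exact hqv ((qf_zero_iff_even v).2 (hC.2 v hvC))
      rw [this]
      simpa using hbnd0
  calc (∑ v ∈ univ.filter (fun v : Fin n → F₄ => wt v = i),
        ((SF.filter fun C => v ∈ C).card : ℚ))
      ≤ ∑ _v ∈ univ.filter (fun v : Fin n → F₄ => wt v = i), bnd :=
        Finset.sum_le_sum hper
    _ = ((univ.filter (fun v : Fin n → F₄ => wt v = i)).card : ℚ) * bnd := by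
        rw [Finset.sum_const, nsmul_eq_mul]
    _ ≤ ((n.choose i * 3 ^ i : ℕ) : ℚ) * bnd := by
        refine mul_le_mul_of_nonneg_right ?_ hbnd0
        exact_mod_cast card_weight_sphere
    _ = ((SF.card : ℚ)) * tildeB n k i := by
        rw [tildeB, hbnd, hD]
        push_cast
        field_simp

lemma tildeB_pos {n k i : ℕ} (hn : 2 ≤ n) (hk : 1 ≤ k) (hin : i ≤ n) :
    0 < tildeB n k i := by
  rw [tildeB]
  have hD := D_pos hn
  have h1 : (1 : ℚ) < 4 ^ k := by
    calc (1 : ℚ) < 4 := by norm_num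
    _ = 4 ^ 1 := (pow_one _).symm
    _ ≤ 4 ^ k := pow_le_pow_right₀ (by norm_num) hk
  have hch : 0 < (n.choose i : ℚ) := by
    exact_mod_cast Nat.choose_pos hin
  have h3 : (0 : ℚ) < 3 ^ i := by positivity
  have hnum : 0 < (4 : ℚ) ^ k - 1 := by linarith
  positivity


open Finset in
/-- Theorem 5: there exists a code `C ∈ S_{n,k}` with `B_i(C) ≤ n² \tilde B_i` for all
`1 ≤ i ≤ n`; moreover, the number of codes violating at least one of these
inequalities is at most `|S_{n,k}|/n`. -/
theorem exists_code_with_bounded_weight_distribution (n k : ℕ)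
    (hn : 2 ≤ n) (hk : 1 ≤ k) (hne : (Snk n k).Nonempty) :
    (∃ C ∈ Snk n k, ∀ i, 1 ≤ i → i ≤ n →
        (Bw i (C : Set (Fin n → F₄)) : ℚ) ≤ (n : ℚ) ^ 2 * tildeB n k i) ∧
    ({C ∈ Snk n k | ∃ i, 1 ≤ i ∧ i ≤ n ∧
        (n : ℚ) ^ 2 * tildeB n k i < (Bw i (C : Set (Fin n → F₄)) : ℚ)}.ncard : ℚ)
      ≤ ((Snk n k).ncard : ℚ) / n := by
  set SF := (Snk n k).toFinset with hSF
  have hSFcard : ((Snk n k).ncard : ℚ) = (SF.card : ℚ) := by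
    rw [Set.ncard_eq_toFinset_card']
  have hnQ : (0 : ℚ) < n := by exact_mod_cast (by omega : 0 < n)
  have hn2Q : (0 : ℚ) < (n : ℚ) ^ 2 := by positivity
  -- Markov for each i
  have hMarkov : ∀ i, 1 ≤ i → i ≤ n →
      ((SF.filter fun C : Submodule F₄ (Fin n → F₄) =>
          (n : ℚ) ^ 2 * tildeB n k i < (Bw i (C : Set (Fin n → F₄)) : ℚ)).card : ℚ)
        ≤ (SF.card : ℚ) / (n : ℚ) ^ 2 := by
    intro i hi1 hin
    set Bad := SF.filter fun C : Submodule F₄ (Fin n → F₄) =>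
      (n : ℚ) ^ 2 * tildeB n k i < (Bw i (C : Set (Fin n → F₄)) : ℚ) with hBad
    have htB := tildeB_pos (i := i) hn hk hin
    have h1 : (Bad.card : ℚ) * ((n : ℚ) ^ 2 * tildeB n k i)
        ≤ ∑ C ∈ Bad, (Bw i (C : Set (Fin n → F₄)) : ℚ) := by
      calc (Bad.card : ℚ) * ((n : ℚ) ^ 2 * tildeB n k i)
          = ∑ _C ∈ Bad, (n : ℚ) ^ 2 * tildeB n k i := by
            rw [Finset.sum_const, nsmul_eq_mul]
        _ ≤ ∑ C ∈ Bad, (Bw i (C : Set (Fin n → F₄)) : ℚ) := by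
            refine Finset.sum_le_sum fun C hC => ?_
            rw [hBad, mem_filter] at hC
            exact le_of_lt hC.2
    have h2 : ∑ C ∈ Bad, (Bw i (C : Set (Fin n → F₄)) : ℚ)
        ≤ ∑ C ∈ SF, (Bw i (C : Set (Fin n → F₄)) : ℚ) := by
      refine Finset.sum_le_sum_of_subset_of_nonneg (filter_subset _ _) ?_
      intro C _ _
      positivity
    have h3 := sum_Bw_bound hn hk i hi1 hin
    have h4 : (Bad.card : ℚ) * ((n : ℚ) ^ 2 * tildeB n k i)
        ≤ (SF.card : ℚ) * tildeB n k i := le_trans h1 (le_trans h2 h3)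
    rw [← mul_assoc] at h4
    rw [le_div_iff₀ hn2Q]
    exact (mul_le_mul_iff_of_pos_right htB).1 h4
  -- the set of bad codes
  set P : Submodule F₄ (Fin n → F₄) → Prop := fun C => ∃ i, 1 ≤ i ∧ i ≤ n ∧
      (n : ℚ) ^ 2 * tildeB n k i < (Bw i (C : Set (Fin n → F₄)) : ℚ) with hP
  have hBadSet : ({C ∈ Snk n k | P C}.ncard : ℚ) = ((SF.filter P).card : ℚ) := by
    rw [Set.ncard_eq_toFinset_card']
    congr 2
    ext C
    simp [hSF, Set.mem_toFinset]
  have hUnion : (SF.filter P) ⊆ (Finset.Icc 1 n).biUnion (fun i =>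
      SF.filter fun C : Submodule F₄ (Fin n → F₄) =>
        (n : ℚ) ^ 2 * tildeB n k i < (Bw i (C : Set (Fin n → F₄)) : ℚ)) := by
    intro C hC
    rw [mem_filter] at hC
    obtain ⟨hCS, i, hi1, hin, hilt⟩ := hC
    rw [mem_biUnion]
    exact ⟨i, Finset.mem_Icc.2 ⟨hi1, hin⟩, mem_filter.2 ⟨hCS, hilt⟩⟩
  have hBadCard : ((SF.filter P).card : ℚ) ≤ (SF.card : ℚ) / n := by
    calc ((SF.filter P).card : ℚ)
        ≤ (((Finset.Icc 1 n).biUnion (fun i =>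
            SF.filter fun C : Submodule F₄ (Fin n → F₄) =>
              (n : ℚ) ^ 2 * tildeB n k i < (Bw i (C : Set (Fin n → F₄)) : ℚ))).card : ℚ) := by
          exact_mod_cast Finset.card_le_card hUnion
      _ ≤ ∑ i ∈ Finset.Icc 1 n, ((SF.filter fun C : Submodule F₄ (Fin n → F₄) =>
            (n : ℚ) ^ 2 * tildeB n k i < (Bw i (C : Set (Fin n → F₄)) : ℚ)).card : ℚ) := by
          exact_mod_cast Finset.card_biUnion_le
      _ ≤ ∑ _i ∈ Finset.Icc 1 n, (SF.card : ℚ) / (n : ℚ) ^ 2 := by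
          refine Finset.sum_le_sum fun i hi => ?_
          rw [Finset.mem_Icc] at hi
          exact hMarkov i hi.1 hi.2
      _ = (n : ℚ) * ((SF.card : ℚ) / (n : ℚ) ^ 2) := by
          rw [Finset.sum_const, nsmul_eq_mul, Nat.card_Icc]
          norm_num
      _ = (SF.card : ℚ) / n := by
          field_simp
  constructor
  · -- existence of a good code
    by_contra hcon
    push_neg at hcon
    have hall : ∀ C ∈ SF, P C := by
      intro C hC
      rw [hSF, Set.mem_toFinset] at hC
      obtain ⟨i, hi1, hin, hlt⟩ := hcon C hC
      exact ⟨i, hi1, hin, hlt⟩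
    have heq : SF.filter P = SF := by
      rw [Finset.filter_eq_self]
      exact hall
    have hpos : 0 < (SF.card : ℚ) := by
      have : SF.Nonempty := by
        obtain ⟨C, hC⟩ := hne
        exact ⟨C, by rw [hSF, Set.mem_toFinset]; exact hC⟩
      exact_mod_cast Finset.card_pos.2 this
    rw [heq] at hBadCard
    have : (SF.card : ℚ) / n < (SF.card : ℚ) := by
      rw [div_lt_iff₀ hnQ]
      have h2n : (2 : ℚ) ≤ n := by exact_mod_cast hn
      nlinarith
    linarith
  · rw [hSFcard]
    calc ({C ∈ Snk n k | P C}.ncard : ℚ) = ((SF.filter P).card : ℚ) := hBadSet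
      _ ≤ (SF.card : ℚ) / n := hBadCard
end

section
/- Let n ≥ 1 and q ≥ 2 be integers, M > 1 a real number, and p a real number with 0 ≤ p ≤ 1. Let B_1, …, B_n be nonnegative reals satisfying: (a) Σ_{j=1}^{n} B_j = M − 1; (b) Σ_{j=1}^{n} B_j K_i(q;j) ≥ −C(n,i)(q−1)^i for all 1 ≤ i ≤ n; (c) Σ_{i=1}^{n} B_i K_j(q;i) − M·B_j ≥ −C(n,j)(q−1)^j for all 1 ≤ j ≤ n. Set B_0 = 1 and define B_j^⊥ := (1/M) Σ_{i=0}^{n} B_i K_j(q;i). Let z_0, y_0 be arbitrary reals and z_1, …, z_n, y_1, …, y_n nonnegative reals, and put Z(x) = Σ_{i=0}^{n} z_i K_i(q;x), Y(x) = Σ_{i=0}^{n} y_i K_i(q;x). If for all 1 ≤ j ≤ n: Z(j) + Y(j) − y_0 − y_j·M ≤ ((q−1−qp)/(q−1))^j − M·(p/(q−1))^j (1−p)^{n−j}, then Σ_{j=1}^{n} (B_j^⊥ − B_j) (p/(q−1))^j (1−p)^{n−j} ≥ (1/M)·(z_0·M − Z(0) − Y(0) + y_0) − (1−p)^n + 1/M.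 -/
/-- The `q`-ary Krawtchouk polynomial `K_t(q;x)` (with parameter `n`), evaluated at a
natural number `x`. -/
def kraw (n q t x : ℕ) : ℤ :=
  ∑ l ∈ Finset.range (t + 1),
    (-1 : ℤ) ^ l * (x.choose l) * ((n - x).choose (t - l)) * ((q : ℤ) - 1) ^ (t - l)

lemma kraw_deg_zero (n q x : ℕ) : kraw n q 0 x = 1 := by simp [kraw]

lemma kraw_at_zero (n q t : ℕ) : kraw n q t 0 = (n.choose t) * ((q:ℤ)-1)^t := by
  unfold kraw
  rw [Finset.sum_eq_single 0]
  · simp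
  · intro l hl hl0
    simp [Nat.choose_eq_zero_of_lt (Nat.pos_of_ne_zero hl0)]
  · intro h; simp at h

lemma kraw_sum (n q x : ℕ) (hx : x ≤ n) (a b : ℝ) :
    ∑ j ∈ Finset.range (n+1), (kraw n q j x : ℝ) * (a^j * b^(n-j))
      = (b - a)^x * (b + ((q:ℝ)-1)*a)^(n-x) := by
  set f : ℕ × ℕ → ℝ := fun lm =>
    (-1:ℝ)^lm.1 * (x.choose lm.1) * ((n-x).choose lm.2) * ((q:ℝ)-1)^lm.2
      * (a^(lm.1+lm.2) * b^(n-(lm.1+lm.2))) with hf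
  have hvanish : ∀ lm : ℕ × ℕ, (x < lm.1 ∨ n - x < lm.2) → f lm = 0 := by
    rintro ⟨l, m⟩ (h | h) <;>
      simp [hf, Nat.choose_eq_zero_of_lt h]
  -- LHS as triangle sum
  have step1 : ∀ j ∈ Finset.range (n+1),
      (kraw n q j x : ℝ) * (a^j * b^(n-j)) = ∑ l ∈ Finset.range (j+1), f (l, j-l) := by
    intro j hj
    rw [kraw]
    push_cast
    rw [Finset.sum_mul]
    refine Finset.sum_congr rfl ?_
    intro l hl
    simp only [Finset.mem_range] at hl
    have : l + (j - l) = j := by omega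
    simp only [hf, this]
  rw [Finset.sum_congr rfl step1]
  -- triangle sum to square sum
  have step2 : ∑ j ∈ Finset.range (n+1), ∑ l ∈ Finset.range (j+1), f (l, j-l)
      = ∑ lm ∈ (Finset.range (n+1) ×ˢ Finset.range (n+1)).filter
          (fun lm => lm.1 + lm.2 ≤ n), f lm := by
    rw [Finset.sum_sigma']
    refine Finset.sum_nbij' (fun jl => (jl.2, jl.1 - jl.2)) (fun lm => ⟨lm.1 + lm.2, lm.1⟩)
      ?_ ?_ ?_ ?_ ?_
    · rintro ⟨j, l⟩ h
      simp only [Finset.mem_sigma, Finset.mem_range] at h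
      simp only [Finset.mem_filter, Finset.mem_product, Finset.mem_range]
      omega
    · rintro ⟨l, m⟩ h
      simp only [Finset.mem_filter, Finset.mem_product, Finset.mem_range] at h
      simp only [Finset.mem_sigma, Finset.mem_range]
      omega
    · rintro ⟨j, l⟩ h
      simp only [Finset.mem_sigma, Finset.mem_range] at h
      have h1 : l + (j - l) = j := by omega
      simp only [h1]
    · rintro ⟨l, m⟩ h
      have h1 : l + m - l = m := by omega
      simp only [h1]
    · rintro ⟨j, l⟩ h; rfl
  rw [step2]
  rw [Finset.sum_filter_of_ne (by
    rintro ⟨l, m⟩ hmem hne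
    by_contra hgt
    exact hne (hvanish (l, m) (by omega)))]
  -- square sum equals RHS
  have expand1 : (b - a)^x = ∑ l ∈ Finset.range (x+1),
      (-a)^l * b^(x-l) * (x.choose l) := by
    rw [sub_eq_add_neg, add_comm, add_pow]
  have expand2 : (b + ((q:ℝ)-1)*a)^(n-x) = ∑ m ∈ Finset.range (n-x+1),
      (((q:ℝ)-1)*a)^m * b^(n-x-m) * ((n-x).choose m) := by
    rw [add_comm, add_pow]
  rw [expand1, expand2, Finset.sum_mul_sum]
  rw [← Finset.sum_product']
  have hsub : Finset.range (x+1) ×ˢ Finset.range (n-x+1)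
      ⊆ Finset.range (n+1) ×ˢ Finset.range (n+1) :=
    Finset.product_subset_product (Finset.range_subset_range.2 (by omega))
      (Finset.range_subset_range.2 (by omega))
  rw [← Finset.sum_subset hsub
      (by
        rintro ⟨l, m⟩ h1 h2
        simp only [Finset.mem_product, Finset.mem_range] at h1 h2
        exact hvanish (l, m) (by omega))]
  refine Finset.sum_congr rfl ?_
  rintro ⟨l, m⟩ h
  simp only [Finset.mem_product, Finset.mem_range] at h
  have hb : b^(x-l) * b^(n-x-m) = b^(n-(l+m)) := by
    rw [← pow_add]; congr 1; omega
  simp only [hf]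
  rw [neg_pow a l, mul_pow, pow_add, ← hb]
  ring


/-- Theorem 9 (LP dual bound via the primal weight distribution `B`): any feasible
solution `(z, y)` of the dual linear program yields a lower bound on the probability
of undetected error. -/
theorem lp_lower_bound_via_primal (n q : ℕ) (hn : 1 ≤ n) (hq : 2 ≤ q)
    (M : ℝ) (hM : 1 < M) (p : ℝ) (hp0 : 0 ≤ p) (hp1 : p ≤ 1)
    (B : ℕ → ℝ) (hB0 : B 0 = 1)
    (hBnn : ∀ j, 1 ≤ j → j ≤ n → 0 ≤ B j)
    (ha : ∑ j ∈ Finset.Icc 1 n, B j = M - 1)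
    (hb : ∀ i, 1 ≤ i → i ≤ n →
      -(((n.choose i) : ℝ) * ((q : ℝ) - 1) ^ i)
        ≤ ∑ j ∈ Finset.Icc 1 n, B j * (kraw n q i j : ℝ))
    (hc : ∀ j, 1 ≤ j → j ≤ n →
      -(((n.choose j) : ℝ) * ((q : ℝ) - 1) ^ j)
        ≤ ∑ i ∈ Finset.Icc 1 n, B i * (kraw n q j i : ℝ) - M * B j)
    (Bperp : ℕ → ℝ)
    (hBperp : ∀ j, j ≤ n →
      Bperp j = (1 / M) * ∑ i ∈ Finset.range (n + 1), B i * (kraw n q j i : ℝ))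
    (z y : ℕ → ℝ)
    (hz : ∀ j, 1 ≤ j → j ≤ n → 0 ≤ z j) (hy : ∀ j, 1 ≤ j → j ≤ n → 0 ≤ y j)
    (Z Y : ℕ → ℝ)
    (hZ : ∀ x, x ≤ n → Z x = ∑ i ∈ Finset.range (n + 1), z i * (kraw n q i x : ℝ))
    (hY : ∀ x, x ≤ n → Y x = ∑ i ∈ Finset.range (n + 1), y i * (kraw n q i x : ℝ))
    (hfeas : ∀ j, 1 ≤ j → j ≤ n →
      Z j + Y j - y 0 - y j * M
        ≤ (((q : ℝ) - 1 - q * p) / ((q : ℝ) - 1)) ^ j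
          - M * (p / ((q : ℝ) - 1)) ^ j * (1 - p) ^ (n - j)) :
    ∑ j ∈ Finset.Icc 1 n,
        (Bperp j - B j) * (p / ((q : ℝ) - 1)) ^ j * (1 - p) ^ (n - j)
      ≥ (1 / M) * (z 0 * M - Z 0 - Y 0 + y 0) - (1 - p) ^ n + 1 / M := by
  have hq2 : (2:ℝ) ≤ (q:ℝ) := by exact_mod_cast hq
  have hq1 : (1:ℝ) ≤ (q:ℝ) - 1 := by linarith
  have hqne : (q:ℝ) - 1 ≠ 0 := by linarith
  have hM0 : (0:ℝ) < M := by linarith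
  set a : ℝ := p / ((q:ℝ)-1) with haa
  set w : ℕ → ℝ := fun j => a^j * (1-p)^(n-j) with hw
  set s : ℕ → ℝ := fun i => (((q:ℝ)-1-(q:ℝ)*p)/((q:ℝ)-1))^i with hs
  have hgen : ∀ i, i ≤ n →
      ∑ j ∈ Finset.range (n+1), (kraw n q j i : ℝ) * w j = s i := by
    intro i hi
    have h1 : (1:ℝ) - p + ((q:ℝ)-1) * a = 1 := by
      rw [haa]; field_simp; ring
    have h2 : (1:ℝ) - p - a = ((q:ℝ)-1-(q:ℝ)*p)/((q:ℝ)-1) := by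
      rw [haa]; field_simp; ring
    have h3 := kraw_sum n q i hi a (1-p)
    rw [h1, h2, one_pow, mul_one] at h3
    simpa [hw, hs] using h3
  have hrange : Finset.range (n+1) = insert 0 (Finset.Icc 1 n) := by
    ext m
    simp only [Finset.mem_range, Finset.mem_insert, Finset.mem_Icc]
    omega
  have h0notin : (0:ℕ) ∉ Finset.Icc 1 n := by simp
  have hsplit : ∀ g : ℕ → ℝ,
      ∑ j ∈ Finset.range (n+1), g j = g 0 + ∑ j ∈ Finset.Icc 1 n, g j := by
    intro g; rw [hrange, Finset.sum_insert h0notin]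
  have hgen' : ∀ i, i ≤ n →
      ∑ j ∈ Finset.Icc 1 n, (kraw n q j i : ℝ) * w j = s i - (1-p)^n := by
    intro i hi
    have h4 := hgen i hi
    rw [hsplit (fun j => (kraw n q j i : ℝ) * w j)] at h4
    have h0 : (kraw n q 0 i : ℝ) * w 0 = (1-p)^n := by
      simp [kraw_deg_zero, hw]
    linarith [h4, h0]
  have hBperp' : ∀ j ∈ Finset.Icc 1 n, M * Bperp j
      = ∑ i ∈ Finset.range (n+1), B i * (kraw n q j i : ℝ) := by
    intro j hj
    simp only [Finset.mem_Icc] at hj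
    rw [hBperp j hj.2, ← mul_assoc, mul_one_div, div_self (ne_of_gt hM0), one_mul]
  -- key identity
  have key : M * ∑ j ∈ Finset.Icc 1 n, (Bperp j - B j) * a^j * (1-p)^(n-j)
      = 1 - M*(1-p)^n + (∑ i ∈ Finset.Icc 1 n, B i * s i
          - M * ∑ i ∈ Finset.Icc 1 n, B i * w i) := by
    have e1 : M * ∑ j ∈ Finset.Icc 1 n, (Bperp j - B j) * a^j * (1-p)^(n-j)
        = ∑ j ∈ Finset.Icc 1 n, ((M * Bperp j) * w j - M * (B j * w j)) := by
      rw [Finset.mul_sum]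
      refine Finset.sum_congr rfl fun j hj => ?_
      simp only [hw]
      ring
    have e2 : ∑ j ∈ Finset.Icc 1 n, (M * Bperp j) * w j
        = ∑ i ∈ Finset.range (n+1), B i * (s i - (1-p)^n) := by
      calc ∑ j ∈ Finset.Icc 1 n, (M * Bperp j) * w j
          = ∑ j ∈ Finset.Icc 1 n, ∑ i ∈ Finset.range (n+1),
              B i * ((kraw n q j i : ℝ) * w j) := by
            refine Finset.sum_congr rfl fun j hj => ?_
            rw [hBperp' j hj, Finset.sum_mul]
            exact Finset.sum_congr rfl fun i _ => by ring
        _ = ∑ i ∈ Finset.range (n+1), ∑ j ∈ Finset.Icc 1 n,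
              B i * ((kraw n q j i : ℝ) * w j) := Finset.sum_comm
        _ = ∑ i ∈ Finset.range (n+1), B i * (s i - (1-p)^n) := by
            refine Finset.sum_congr rfl fun i hi => ?_
            simp only [Finset.mem_range] at hi
            rw [← Finset.mul_sum, hgen' i (by omega)]
    have e3 : ∑ i ∈ Finset.range (n+1), B i * (s i - (1-p)^n)
        = 1 - (1-p)^n + (∑ i ∈ Finset.Icc 1 n, B i * s i - (M-1) * (1-p)^n) := by
      rw [hsplit (fun i => B i * (s i - (1-p)^n))]
      have e4 : ∑ i ∈ Finset.Icc 1 n, B i * (s i - (1-p)^n)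
          = ∑ i ∈ Finset.Icc 1 n, B i * s i - (∑ i ∈ Finset.Icc 1 n, B i) * (1-p)^n := by
        rw [Finset.sum_mul, ← Finset.sum_sub_distrib]
        exact Finset.sum_congr rfl fun i _ => by ring
      rw [e4, ha, hB0, hs]
      simp only [pow_zero]
      ring
    rw [e1, Finset.sum_sub_distrib, ← Finset.mul_sum, e2, e3]
    ring
  -- feasibility bound
  have ineq1 : ∑ i ∈ Finset.Icc 1 n, B i * (Z i + Y i - y 0 - y i * M)
      ≤ ∑ i ∈ Finset.Icc 1 n, B i * s i - M * ∑ i ∈ Finset.Icc 1 n, B i * w i := by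
    have e5 : ∑ i ∈ Finset.Icc 1 n, B i * s i - M * ∑ i ∈ Finset.Icc 1 n, B i * w i
        = ∑ i ∈ Finset.Icc 1 n, (B i * s i - M * (B i * w i)) := by
      rw [Finset.sum_sub_distrib, ← Finset.mul_sum]
    rw [e5]
    refine Finset.sum_le_sum fun i hi => ?_
    simp only [Finset.mem_Icc] at hi
    have hf := hfeas i hi.1 hi.2
    have hB := hBnn i hi.1 hi.2
    have := mul_le_mul_of_nonneg_left hf hB
    simp only [hw, hs]
    nlinarith [this]
  -- Z bound
  have hswapZ : ∀ (u : ℕ → ℝ) (U : ℕ → ℝ),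
      (∀ x, x ≤ n → U x = ∑ i ∈ Finset.range (n + 1), u i * (kraw n q i x : ℝ)) →
      ∑ j ∈ Finset.Icc 1 n, B j * U j
      = u 0 * (M-1) + ∑ i ∈ Finset.Icc 1 n,
          u i * (∑ j ∈ Finset.Icc 1 n, B j * (kraw n q i j : ℝ)) := by
    intro u U hU
    calc ∑ j ∈ Finset.Icc 1 n, B j * U j
        = ∑ j ∈ Finset.Icc 1 n, ∑ i ∈ Finset.range (n+1),
            u i * (B j * (kraw n q i j : ℝ)) := by
          refine Finset.sum_congr rfl fun j hj => ?_
          simp only [Finset.mem_Icc] at hj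
          rw [hU j hj.2, Finset.mul_sum]
          exact Finset.sum_congr rfl fun i _ => by ring
      _ = ∑ i ∈ Finset.range (n+1), ∑ j ∈ Finset.Icc 1 n,
            u i * (B j * (kraw n q i j : ℝ)) := Finset.sum_comm
      _ = ∑ i ∈ Finset.range (n+1),
            u i * (∑ j ∈ Finset.Icc 1 n, B j * (kraw n q i j : ℝ)) := by
          exact Finset.sum_congr rfl fun i _ => by rw [Finset.mul_sum]
      _ = u 0 * (M-1) + ∑ i ∈ Finset.Icc 1 n,
            u i * (∑ j ∈ Finset.Icc 1 n, B j * (kraw n q i j : ℝ)) := by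
          rw [hsplit (fun i => u i * (∑ j ∈ Finset.Icc 1 n, B j * (kraw n q i j : ℝ)))]
          congr 1
          have : ∑ j ∈ Finset.Icc 1 n, B j * (kraw n q 0 j : ℝ)
              = ∑ j ∈ Finset.Icc 1 n, B j := by
            exact Finset.sum_congr rfl fun j _ => by rw [kraw_deg_zero]; simp
          rw [this, ha]
  have hU0 : ∀ (u : ℕ → ℝ) (U : ℕ → ℝ),
      (∀ x, x ≤ n → U x = ∑ i ∈ Finset.range (n + 1), u i * (kraw n q i x : ℝ)) →
      U 0 = u 0 + ∑ i ∈ Finset.Icc 1 n, u i * ((n.choose i : ℝ) * ((q:ℝ)-1)^i) := by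
    intro u U hU
    rw [hU 0 (by omega), hsplit (fun i => u i * (kraw n q i 0 : ℝ))]
    congr 1
    · rw [kraw_deg_zero]; simp
    · refine Finset.sum_congr rfl fun i _ => ?_
      rw [kraw_at_zero]
      push_cast
      ring
  have ineqZ : z 0 * M - Z 0 ≤ ∑ j ∈ Finset.Icc 1 n, B j * Z j := by
    rw [hswapZ z Z hZ]
    have hZ0 := hU0 z Z hZ
    have tail : ∑ i ∈ Finset.Icc 1 n, (-(z i * ((n.choose i : ℝ) * ((q:ℝ)-1)^i)))
        ≤ ∑ i ∈ Finset.Icc 1 n,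
            z i * (∑ j ∈ Finset.Icc 1 n, B j * (kraw n q i j : ℝ)) := by
      refine Finset.sum_le_sum fun i hi => ?_
      simp only [Finset.mem_Icc] at hi
      have := mul_le_mul_of_nonneg_left (hb i hi.1 hi.2) (hz i hi.1 hi.2)
      linarith [this]
    rw [Finset.sum_neg_distrib] at tail
    linarith [tail, hZ0]
  have ineqY : y 0 * M - Y 0 ≤ ∑ j ∈ Finset.Icc 1 n, B j * Y j
      - M * ∑ i ∈ Finset.Icc 1 n, y i * B i := by
    rw [hswapZ y Y hY]
    have hY0 := hU0 y Y hY
    have tail : ∑ i ∈ Finset.Icc 1 n, (-(y i * ((n.choose i : ℝ) * ((q:ℝ)-1)^i)))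
        ≤ ∑ i ∈ Finset.Icc 1 n,
            (y i * (∑ j ∈ Finset.Icc 1 n, B j * (kraw n q i j : ℝ)) - M * (y i * B i)) := by
      refine Finset.sum_le_sum fun i hi => ?_
      simp only [Finset.mem_Icc] at hi
      have := mul_le_mul_of_nonneg_left (hc i hi.1 hi.2) (hy i hi.1 hi.2)
      nlinarith [this]
    rw [Finset.sum_neg_distrib, Finset.sum_sub_distrib] at tail
    have e6 : ∑ i ∈ Finset.Icc 1 n, M * (y i * B i)
        = M * ∑ i ∈ Finset.Icc 1 n, y i * B i := by
      rw [Finset.mul_sum]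
    rw [e6] at tail
    linarith [tail, hY0]
  -- expansion of the feasibility sum
  have expand : ∑ i ∈ Finset.Icc 1 n, B i * (Z i + Y i - y 0 - y i * M)
      = ∑ j ∈ Finset.Icc 1 n, B j * Z j + ∑ j ∈ Finset.Icc 1 n, B j * Y j
        - y 0 * (M - 1) - M * ∑ i ∈ Finset.Icc 1 n, y i * B i := by
    have e7 : ∀ i ∈ Finset.Icc 1 n, B i * (Z i + Y i - y 0 - y i * M)
        = (B i * Z i + B i * Y i) - (y 0 * B i + M * (y i * B i)) := fun i _ => by ring
    rw [Finset.sum_congr rfl e7, Finset.sum_sub_distrib, Finset.sum_add_distrib,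
      Finset.sum_add_distrib, ← Finset.mul_sum, ← Finset.mul_sum, ha]
    ring
  have final : z 0 * M - Z 0 - Y 0 + y 0 + 1 - M*(1-p)^n
      ≤ M * ∑ j ∈ Finset.Icc 1 n, (Bperp j - B j) * a^j * (1-p)^(n-j) := by
    linarith [key, ineq1, ineqZ, ineqY, expand]
  rw [ge_iff_le]
  have hrw : (1/M) * (z 0 * M - Z 0 - Y 0 + y 0) - (1-p)^n + 1/M
      = (z 0 * M - Z 0 - Y 0 + y 0 + 1 - M*(1-p)^n) / M := by
    field_simp
    ring
  rw [hrw, div_le_iff₀ hM0]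
  have hcm : (∑ j ∈ Finset.Icc 1 n, (Bperp j - B j) * a^j * (1-p)^(n-j)) * M
      = M * ∑ j ∈ Finset.Icc 1 n, (Bperp j - B j) * a^j * (1-p)^(n-j) := mul_comm _ _
  linarith [final, hcm]
end
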